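/- arXiv:1011.3878 — 5 statements merged into one kernel-verified Lean document; each statement's English description precedes it below -/
import Mathlib

section
/- If n ≥ 2 angles θ₁,…,θₙ on the unit circle are all contained in a closed arc of length γ ∈ [0, π], then the magnitude r = (1/n)|∑ⱼ exp(i θⱼ)| of their order parameter satisfies cos(γ/2) ≤ r ≤ 1. -/
open Real Complex Finset

theorem norm_sum_exp_I_mul_le_card {ι : Type*} (s : Finset ι) (θ : ι → ℝ) :
    ‖∑ j ∈ s, Complex.exp (Complex.I * (θ j : ℂ))‖ ≤ #s :=
  calc ‖∑ j ∈ s, Complex.exp (Complex.I * (θ j : ℂ))‖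
      ≤ ∑ j ∈ s, ‖Complex.exp (Complex.I * (θ j : ℂ))‖ := norm_sum_le _ _
    _ = #s := by simp [mul_comm Complex.I, Complex.norm_exp_ofReal_mul_I]

theorem re_exp_neg_I_mul_mul_exp_I_mul (m t : ℝ) :
    (Complex.exp (-(Complex.I * m)) * Complex.exp (Complex.I * t)).re = Real.cos (t - m) := by
  rw [← Complex.exp_add, show -(Complex.I * m) + Complex.I * t = ((t - m : ℝ) : ℂ) * Complex.I by
    push_cast; ring, Complex.exp_ofReal_mul_I_re]

/-- Rotating the sum by `-m` makes every summand have real part at least `cos δ`. -/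
theorem card_mul_cos_le_norm_sum_exp_I_mul {ι : Type*} (s : Finset ι) (θ : ι → ℝ)
    {m δ : ℝ} (hδ : δ ≤ π) (hθ : ∀ j ∈ s, |θ j - m| ≤ δ) :
    #s * Real.cos δ ≤ ‖∑ j ∈ s, Complex.exp (Complex.I * (θ j : ℂ))‖ := by
  set S := ∑ j ∈ s, Complex.exp (Complex.I * (θ j : ℂ))
  have hre : (Complex.exp (-(Complex.I * m)) * S).re = ∑ j ∈ s, Real.cos (θ j - m) := by
    simp only [S, Finset.mul_sum, Complex.re_sum, re_exp_neg_I_mul_mul_exp_I_mul]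
  have hrot : ‖Complex.exp (-(Complex.I * m)) * S‖ = ‖S‖ := by
    rw [norm_mul, ← mul_neg, ← ofReal_neg, mul_comm I, Complex.norm_exp_ofReal_mul_I, one_mul]
  calc #s * Real.cos δ = ∑ _j ∈ s, Real.cos δ := by rw [sum_const, nsmul_eq_mul]
    _ ≤ ∑ j ∈ s, Real.cos (θ j - m) := sum_le_sum fun j hj => by
        rw [← Real.cos_abs (θ j - m)]
        exact Real.cos_le_cos_of_nonneg_of_le_pi (abs_nonneg _) hδ (hθ j hj)
    _ = (Complex.exp (-(Complex.I * m)) * S).re := hre.symm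
    _ ≤ ‖S‖ := hrot ▸ Complex.re_le_norm _

/-- If `n ≥ 2` angles are all contained in a closed arc of length `γ ∈ [0, π]`,
then the magnitude of their order parameter satisfies `cos (γ/2) ≤ r ≤ 1`. -/
theorem stmt_0 (n : ℕ) (hn : 2 ≤ n) (θ : Fin n → ℝ) (γ : ℝ)
    (hγ : γ ∈ Set.Icc (0:ℝ) π)
    (harc : ∃ c : ℝ, ∀ j, θ j ∈ Set.Icc c (c + γ))
    (r : ℝ)
    (hr : r = (1 / n) * ‖∑ j, Complex.exp (Complex.I * (θ j : ℂ))‖) :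
    Real.cos (γ / 2) ≤ r ∧ r ≤ 1 := by
  obtain ⟨c, hc⟩ := harc
  have hn0 : (0 : ℝ) < n := Nat.cast_pos.mpr (by omega)
  have hmid : ∀ j ∈ univ, |θ j - (c + γ / 2)| ≤ γ / 2 := fun j _ => by
    rw [abs_le]; constructor <;> linarith [(hc j).1, (hc j).2]
  have hlower := card_mul_cos_le_norm_sum_exp_I_mul univ θ (by linarith [hγ.2, pi_pos]) hmid
  have hupper := norm_sum_exp_I_mul_le_card univ θ
  rw [card_univ, Fintype.card_fin] at hlower hupper
  subst hr
  rw [one_div, ← div_eq_inv_mul, le_div_iff₀ hn0, div_le_one hn0, mul_comm]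
  exact ⟨hlower, hupper⟩
end

section
/- Let γ ∈ [0, π] and let θ₁,…,θₙ be real numbers with max θᵢ − min θᵢ = γ. Let m be an index attaining the maximum and ℓ an index attaining the minimum. Then for every i, sin(θ_m − θ_i) + sin(θ_i − θ_ℓ) ≥ sin(γ), with equality when θ_i ∈ {θ_m, θ_ℓ}. -/
open Real Finset

lemma sin_add_sin_ge (a b : ℝ) (ha : 0 ≤ a) (hb : 0 ≤ b) (hab : a + b ≤ π) :
    Real.sin (a + b) ≤ Real.sin a + Real.sin b := by
  have key : Real.sin a + Real.sin b = 2 * Real.sin ((a + b) / 2) * Real.cos ((a - b) / 2) := by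
    have h1 : a = (a+b)/2 + (a-b)/2 := by ring
    have h2 : b = (a+b)/2 - (a-b)/2 := by ring
    rw [h1, h2, Real.sin_add, Real.sin_sub]; ring
  have key2 : Real.sin (a + b) = 2 * Real.sin ((a + b) / 2) * Real.cos ((a + b) / 2) := by
    rw [← Real.sin_two_mul]; ring_nf
  rw [key, key2]
  have hs : 0 ≤ Real.sin ((a + b) / 2) := by
    apply Real.sin_nonneg_of_nonneg_of_le_pi <;> linarith
  have hc : Real.cos ((a + b) / 2) ≤ Real.cos ((a - b) / 2) := by
    rcases le_total 0 (a - b) with h | h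
    · apply Real.cos_le_cos_of_nonneg_of_le_pi <;> linarith
    · rw [show (a - b) / 2 = -((b - a) / 2) by ring, Real.cos_neg]
      apply Real.cos_le_cos_of_nonneg_of_le_pi <;> linarith
  nlinarith

/-- Key trigonometric estimate: if all `θ i` lie between `θ ℓ` (the minimum)
and `θ m` (the maximum) with `θ m − θ ℓ = γ ∈ [0, π]`, then for every `i`,
`sin (θ m − θ i) + sin (θ i − θ ℓ) ≥ sin γ`, with equality when
`θ i ∈ {θ m, θ ℓ}`. -/
theorem stmt_5 (n : ℕ) (θ : Fin n → ℝ) (γ : ℝ) (hγ : γ ∈ Set.Icc (0:ℝ) π)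
    (m ℓ : Fin n)
    (hmax : ∀ i, θ i ≤ θ m) (hmin : ∀ i, θ ℓ ≤ θ i)
    (hgap : θ m - θ ℓ = γ) :
    (∀ i, Real.sin γ ≤ Real.sin (θ m - θ i) + Real.sin (θ i - θ ℓ)) ∧
    (∀ i, θ i = θ m ∨ θ i = θ ℓ →
      Real.sin (θ m - θ i) + Real.sin (θ i - θ ℓ) = Real.sin γ) := by
  obtain ⟨hγ0, hγπ⟩ := hγ
  constructor
  · intro i
    have := sin_add_sin_ge (θ m - θ i) (θ i - θ ℓ)
      (by linarith [hmax i]) (by linarith [hmin i]) (by linarith)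
    calc Real.sin γ = Real.sin ((θ m - θ i) + (θ i - θ ℓ)) := by rw [show (θ m - θ i) + (θ i - θ ℓ) = γ by linarith]
    _ ≤ _ := this
  · rintro i (h | h) <;> rw [h] <;> simp [show θ m - θ ℓ = γ from hgap]
end

section
/- Let θ₁,…,θₙ be real numbers contained in an interval of length γ ∈ [0, π], with θ_m the maximum and θ_ℓ the minimum, θ_m − θ_ℓ = γ. Then (ω_m − ω_ℓ) − (K/n)·∑_{i=1}^n [sin(θ_m − θ_i) + sin(θ_i − θ_ℓ)] ≤ (ω_max − ω_min) − K·sin(γ), where ω_max = max ωᵢ and ω_min = min ωᵢ. -/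
open Real Finset

lemma sin_add_le_aux {a b : ℝ} (ha : 0 ≤ a) (hb : 0 ≤ b) (hab : a + b ≤ π) :
    Real.sin (a + b) ≤ Real.sin a + Real.sin b := by
  have hsa : 0 ≤ Real.sin a := Real.sin_nonneg_of_nonneg_of_le_pi ha (by linarith)
  have hsb : 0 ≤ Real.sin b := Real.sin_nonneg_of_nonneg_of_le_pi hb (by linarith)
  have h1 : Real.cos b ≤ 1 := Real.cos_le_one b
  have h2 : Real.cos a ≤ 1 := Real.cos_le_one a
  rw [Real.sin_add]
  nlinarith

/-- Dini-derivative bound for the arc-length Lyapunov function: with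
`θ m` the maximum, `θ ℓ` the minimum, `θ m − θ ℓ = γ ∈ [0, π]`,
`(ω m − ω ℓ) − (K/n) ∑ᵢ [sin (θ m − θ i) + sin (θ i − θ ℓ)]
  ≤ (ω_max − ω_min) − K sin γ`. -/
theorem stmt_6 (n : ℕ) (hn : 0 < n) (θ ω : Fin n → ℝ) (K γ : ℝ) (hK : 0 < K)
    (hγ : γ ∈ Set.Icc (0:ℝ) π) (m ℓ : Fin n)
    (hmax : ∀ i, θ i ≤ θ m) (hmin : ∀ i, θ ℓ ≤ θ i)
    (hgap : θ m - θ ℓ = γ) :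
    (ω m - ω ℓ) -
        (K / n) * ∑ i, (Real.sin (θ m - θ i) + Real.sin (θ i - θ ℓ)) ≤
      (Finset.univ.sup' ⟨m, Finset.mem_univ m⟩ ω
          - Finset.univ.inf' ⟨m, Finset.mem_univ m⟩ ω)
        - K * Real.sin γ := by
  obtain ⟨hγ0, hγπ⟩ := hγ
  have hω1 : ω m ≤ Finset.univ.sup' ⟨m, Finset.mem_univ m⟩ ω :=
    Finset.le_sup' ω (Finset.mem_univ m)
  have hω2 : Finset.univ.inf' ⟨m, Finset.mem_univ m⟩ ω ≤ ω ℓ :=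
    Finset.inf'_le ω (Finset.mem_univ ℓ)
  have hsum : (n : ℝ) * Real.sin γ ≤
      ∑ i, (Real.sin (θ m - θ i) + Real.sin (θ i - θ ℓ)) := by
    calc (n : ℝ) * Real.sin γ = ∑ _i : Fin n, Real.sin γ := by
          simp [mul_comm]
      _ ≤ _ := by
          apply Finset.sum_le_sum
          intro i _
          have h := sin_add_le_aux (a := θ m - θ i) (b := θ i - θ ℓ)
            (by linarith [hmax i]) (by linarith [hmin i]) (by linarith)
          have : θ m - θ i + (θ i - θ ℓ) = γ := by linarith
          rwa [this] at h
  have hn' : (0:ℝ) < n := by exact_mod_cast hn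
  have hK' : K * Real.sin γ ≤ (K / n) * ∑ i, (Real.sin (θ m - θ i) + Real.sin (θ i - θ ℓ)) := by
    rw [div_mul_eq_mul_div, le_div_iff₀ hn']
    nlinarith
  linarith
end

section
/- Suppose the index set {1,…,n} is partitioned into nonempty sets I₁, I₂, with θᵢ = −γ/2 for i ∈ I₁ and θᵢ = +γ/2 for i ∈ I₂, where γ ∈ [0, π], and ωᵢ = ω_min for i ∈ I₁, ωᵢ = ω_max for i ∈ I₂. Then for m ∈ I₂ and ℓ ∈ I₁, the quantity (ω_m − ω_ℓ) − (K/n)·∑_{i=1}^n [sin(θ_m − θ_i) + sin(θ_i − θ_ℓ)] equals exactly (ω_max − ω_min) − K·sin(γ). -/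
open Real Finset

/- On two antipodal clusters at `±γ/2`, each summand `sin (θ m - θ i) + sin (θ i - θ ℓ)` is
`sin 0 + sin γ` in one order or the other, so the coupling sum is exactly `n sin γ` and the
factor `1/n` cancels. -/

theorem sin_sub_add_sin_add_eq_sin_two_mul {c x : ℝ} (hx : x = -c ∨ x = c) :
    sin (c - x) + sin (x + c) = sin (2 * c) := by
  rcases hx with rfl | rfl <;> ring_nf <;> simp

theorem sum_sin_sub_add_sin_add_of_bipolar {ι : Type*} [Fintype ι] (θ : ι → ℝ) (c : ℝ)
    (hθ : ∀ i, θ i = -c ∨ θ i = c) :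
    ∑ i, (sin (c - θ i) + sin (θ i + c)) = Fintype.card ι * sin (2 * c) := by
  simp [sin_sub_add_sin_add_eq_sin_two_mul (hθ _)]

theorem stmt_7_general (n : ℕ) (θ ω : Fin n → ℝ) (K γ ωmin ωmax : ℝ)
    (I₁ I₂ : Finset (Fin n))
    (hunion : I₁ ∪ I₂ = Finset.univ)
    (hθ₁ : ∀ i ∈ I₁, θ i = -γ / 2) (hθ₂ : ∀ i ∈ I₂, θ i = γ / 2)
    (hω₁ : ∀ i ∈ I₁, ω i = ωmin) (hω₂ : ∀ i ∈ I₂, ω i = ωmax)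
    (m ℓ : Fin n) (hm : m ∈ I₂) (hℓ : ℓ ∈ I₁) :
    (ω m - ω ℓ) -
        (K / n) * ∑ i, (Real.sin (θ m - θ i) + Real.sin (θ i - θ ℓ)) =
      (ωmax - ωmin) - K * Real.sin γ := by
  have hbipolar : ∀ i, θ i = -(γ / 2) ∨ θ i = γ / 2 := by
    intro i
    rcases mem_union.mp (hunion ▸ mem_univ i) with h | h
    · exact .inl (by rw [hθ₁ i h, neg_div])
    · exact .inr (hθ₂ i h)
  have hsum := sum_sin_sub_add_sin_add_of_bipolar θ (γ / 2) hbipolar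
  have hn : (n : ℝ) ≠ 0 := Nat.cast_ne_zero.mpr m.pos.ne'
  rw [Fintype.card_fin, mul_div_cancel₀ γ two_ne_zero] at hsum
  rw [hθ₂ m hm, hθ₁ ℓ hℓ, hω₂ m hm, hω₁ ℓ hℓ, neg_div]
  simp only [sub_neg_eq_add, hsum]
  field_simp

/-- Tightness for the bipolar distribution: with the oscillators split into two
clusters at `−γ/2` and `+γ/2` with frequencies `ω_min` and `ω_max`, the Dini
derivative expression equals exactly `(ω_max − ω_min) − K sin γ`. -/
theorem stmt_7 (n : ℕ) (θ ω : Fin n → ℝ) (K γ ωmin ωmax : ℝ) (hK : 0 < K)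
    (hγ : γ ∈ Set.Icc (0:ℝ) π)
    (I₁ I₂ : Finset (Fin n))
    (hne₁ : I₁.Nonempty) (hne₂ : I₂.Nonempty)
    (hdisj : Disjoint I₁ I₂) (hunion : I₁ ∪ I₂ = Finset.univ)
    (hθ₁ : ∀ i ∈ I₁, θ i = -γ / 2) (hθ₂ : ∀ i ∈ I₂, θ i = γ / 2)
    (hω₁ : ∀ i ∈ I₁, ω i = ωmin) (hω₂ : ∀ i ∈ I₂, ω i = ωmax)
    (m ℓ : Fin n) (hm : m ∈ I₂) (hℓ : ℓ ∈ I₁) :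
    (ω m - ω ℓ) -
        (K / n) * ∑ i, (Real.sin (θ m - θ i) + Real.sin (θ i - θ ℓ)) =
      (ωmax - ωmin) - K * Real.sin γ :=
  stmt_7_general n θ ω K γ ωmin ωmax I₁ I₂ hunion hθ₁ hθ₂ hω₁ hω₂ m ℓ hm hℓ
end

section
/- Let L(t) be a time-varying symmetric Laplacian matrix of a complete weighted graph whose weights satisfy a_{ij}(t) ≥ a > 0 for all t ≥ 0. Then any solution of δ̇ = −L(t)δ with 1ᵀδ(0) = 0 satisfies ‖δ(t)‖ ≤ ‖δ(0)‖·e^{−n·a·t}, where n is the dimension. -/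
open Real Finset Matrix

/-! Since the columns of a symmetric Laplacian sum to zero, `∑ i, δ i` is conserved, so `δ(t)`
stays orthogonal to `1`. For such `x`, `2 xᵀ L x = ∑ i j, a_ij (x_i - x_j)² ≥ a ∑ i j, (x_i - x_j)²
= 2 n a ‖x‖²`, hence `V = ‖δ‖²` satisfies `V' ≤ -2 n a V` and Grönwall's inequality gives
`V(t) ≤ V(0) e^{-2 n a t}`. -/

variable {ι R : Type*} [Fintype ι]

theorem Finset.sum_sum_sub_sq [CommRing R] (x : ι → R) :
    ∑ i, ∑ j, (x i - x j) ^ 2 = 2 * (Fintype.card ι * ∑ i, x i ^ 2 - (∑ i, x i) ^ 2) := by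
  have hexpand : ∀ i j, (x i - x j) ^ 2 = x i ^ 2 + x j ^ 2 - 2 * (x i * x j) := fun i j => by ring
  simp only [hexpand, Finset.sum_add_distrib, Finset.sum_sub_distrib, Finset.sum_const,
    Finset.card_univ, nsmul_eq_mul, ← Finset.mul_sum, ← Finset.sum_mul, sq]
  ring

namespace Matrix

variable [DecidableEq ι]

def laplacian [AddCommGroup R] (B : Matrix ι ι R) : Matrix ι ι R :=
  diagonal (fun i => ∑ j, B i j) - B

section CommRing

variable [CommRing R] {B : Matrix ι ι R}

theorem laplacian_mulVec_one (B : Matrix ι ι R) : laplacian B *ᵥ 1 = 0 := by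
  ext i
  rw [laplacian, sub_mulVec, Pi.sub_apply, mulVec_diagonal]
  simp [mulVec, dotProduct]

theorem isSymm_laplacian (hB : B.IsSymm) : (laplacian B).IsSymm := by
  rw [Matrix.laplacian]
  exact (isSymm_diagonal _).sub hB

theorem IsSymm.sum_laplacian_mulVec (hB : B.IsSymm) (x : ι → R) :
    ∑ i, (laplacian B *ᵥ x) i = 0 := by
  rw [← one_dotProduct, dotProduct_mulVec, ← mulVec_transpose, (isSymm_laplacian hB).eq,
    laplacian_mulVec_one, zero_dotProduct]

theorem dotProduct_laplacian_mulVec (B : Matrix ι ι R) (x : ι → R) :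
    x ⬝ᵥ laplacian B *ᵥ x = ∑ i, ∑ j, B i j * (x i ^ 2 - x i * x j) := by
  rw [laplacian, sub_mulVec, dotProduct_sub]
  simp only [dotProduct, mulVec_diagonal]
  simp only [mulVec, dotProduct, Finset.mul_sum, Finset.sum_mul, ← Finset.sum_sub_distrib]
  exact Finset.sum_congr rfl fun i _ => Finset.sum_congr rfl fun j _ => by ring

theorem IsSymm.two_mul_dotProduct_laplacian_mulVec (hB : B.IsSymm) (x : ι → R) :
    2 * (x ⬝ᵥ laplacian B *ᵥ x) = ∑ i, ∑ j, B i j * (x i - x j) ^ 2 := by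
  calc 2 * (x ⬝ᵥ laplacian B *ᵥ x)
      = ∑ i, ∑ j, B i j * (x i ^ 2 - x i * x j) + ∑ i, ∑ j, B j i * (x j ^ 2 - x j * x i) := by
        rw [dotProduct_laplacian_mulVec, two_mul, Finset.sum_comm (s := univ) (t := univ)
          (f := fun i j => B j i * (x j ^ 2 - x j * x i))]
    _ = ∑ i, ∑ j, B i j * (x i - x j) ^ 2 := by
        simp only [← Finset.sum_add_distrib]
        exact Finset.sum_congr rfl fun i _ => Finset.sum_congr rfl fun j _ => by
          rw [hB.apply i j]; ring

end CommRing

section Ordered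

variable [CommRing R] [LinearOrder R] [IsStrictOrderedRing R] {B : Matrix ι ι R} {a : R}

theorem IsSymm.card_mul_sum_sq_le_dotProduct_laplacian_mulVec (hB : B.IsSymm)
    (ha : ∀ i j, i ≠ j → a ≤ B i j) {x : ι → R} (hx : ∑ i, x i = 0) :
    Fintype.card ι * a * ∑ i, x i ^ 2 ≤ x ⬝ᵥ laplacian B *ᵥ x := by
  refine le_of_mul_le_mul_left ?_ (two_pos (α := R))
  calc 2 * (Fintype.card ι * a * ∑ i, x i ^ 2) = ∑ i, ∑ j, a * (x i - x j) ^ 2 := by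
        simp only [← Finset.mul_sum, Finset.sum_sum_sub_sq, hx]; ring
    _ ≤ ∑ i, ∑ j, B i j * (x i - x j) ^ 2 := by
        refine Finset.sum_le_sum fun i _ => Finset.sum_le_sum fun j _ => ?_
        obtain rfl | hij := eq_or_ne i j
        · simp
        · exact mul_le_mul_of_nonneg_right (ha i j hij) (sq_nonneg _)
    _ = 2 * (x ⬝ᵥ laplacian B *ᵥ x) := (hB.two_mul_dotProduct_laplacian_mulVec x).symm

end Ordered

end Matrix

theorem sum_eq_of_hasDerivAt_of_sum_eq_zero {x x' : ℝ → ι → ℝ}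
    (hx : ∀ t i, HasDerivAt (fun s => x s i) (x' t i) t) (h : ∀ t, ∑ i, x' t i = 0) (t s : ℝ) :
    ∑ i, x t i = ∑ i, x s i := by
  have hsum : ∀ t, HasDerivAt (fun s => ∑ i, x s i) 0 t := fun t => by
    simpa only [h] using HasDerivAt.fun_sum fun i (_ : i ∈ univ) => hx t i
  exact is_const_of_deriv_eq_zero (fun t => (hsum t).differentiableAt) (fun t => (hsum t).deriv)
    t s

theorem hasDerivAt_sum_sq {x : ℝ → ι → ℝ} {x' : ι → ℝ} {t : ℝ}
    (hx : ∀ i, HasDerivAt (fun s => x s i) (x' i) t) :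
    HasDerivAt (fun s => ∑ i, x s i ^ 2) (2 * (x t ⬝ᵥ x')) t := by
  refine (HasDerivAt.fun_sum fun i (_ : i ∈ univ) => (hx i).fun_pow 2).congr_deriv ?_
  simp only [dotProduct, Finset.mul_sum]
  exact Finset.sum_congr rfl fun i _ => by push_cast; ring

theorem le_mul_exp_of_hasDerivAt_le_mul {f f' : ℝ → ℝ} {K : ℝ}
    (hf : ∀ t, 0 ≤ t → HasDerivAt f (f' t) t) (hbound : ∀ t, 0 ≤ t → f' t ≤ K * f t) {t : ℝ}
    (ht : 0 ≤ t) : f t ≤ f 0 * exp (K * t) := by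
  have := le_gronwallBound_of_liminf_deriv_right_le (f' := f') (b := t) (ε := 0)
    (fun s hs => (hf s hs.1).continuousAt.continuousWithinAt)
    (fun s hs _ hr => (hf s hs.1).hasDerivWithinAt.liminf_right_slope_le hr) le_rfl
    (fun s hs => by simpa using hbound s hs.1) t ⟨ht, le_rfl⟩
  rwa [sub_zero, gronwallBound_ε0] at this

theorem stmt_13_general (n : ℕ) (a : ℝ)
    (A : ℝ → Matrix (Fin n) (Fin n) ℝ)
    (hsymm : ∀ t i j, A t i j = A t j i)
    (hw : ∀ t, 0 ≤ t → ∀ i j, i ≠ j → a ≤ A t i j)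
    (L : ℝ → Matrix (Fin n) (Fin n) ℝ)
    (hL : ∀ t, L t = Matrix.diagonal (fun i => ∑ j, A t i j) - A t)
    (δ : ℝ → Fin n → ℝ)
    (hsum : ∑ i, δ 0 i = 0)
    (hderiv : ∀ t i, HasDerivAt (fun s => δ s i) (-((L t).mulVec (δ t) i)) t) :
    ∀ t, 0 ≤ t →
      Real.sqrt (∑ i, δ t i ^ 2) ≤
        Real.sqrt (∑ i, δ 0 i ^ 2) * Real.exp (-(n * a) * t) := by
  have hA : ∀ t, (A t).IsSymm := fun t => IsSymm.ext fun i j => hsymm t j i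
  have hL' : ∀ t, L t = laplacian (A t) := hL
  have hcons : ∀ t, ∑ i, δ t i = 0 := fun t =>
    (sum_eq_of_hasDerivAt_of_sum_eq_zero hderiv (fun s => by
      rw [Finset.sum_neg_distrib, hL', (hA s).sum_laplacian_mulVec, neg_zero]) t 0).trans hsum
  have hbound : ∀ t, 0 ≤ t →
      2 * (δ t ⬝ᵥ -(L t *ᵥ δ t)) ≤ -(2 * (n * a)) * ∑ i, δ t i ^ 2 := fun t ht => by
    have := (hA t).card_mul_sum_sq_le_dotProduct_laplacian_mulVec (hw t ht) (hcons t)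
    rw [Fintype.card_fin, ← hL'] at this
    rw [dotProduct_neg]
    linarith
  intro t ht
  calc √(∑ i, δ t i ^ 2) ≤ √((∑ i, δ 0 i ^ 2) * exp (-(2 * (n * a)) * t)) :=
        Real.sqrt_le_sqrt
          (le_mul_exp_of_hasDerivAt_le_mul (fun s _ => hasDerivAt_sum_sq (hderiv s)) hbound ht)
    _ = √(∑ i, δ 0 i ^ 2) * exp (-(n * a) * t) := by
        rw [Real.sqrt_mul (Finset.sum_nonneg fun i _ => sq_nonneg _), ← Real.exp_half]
        ring_nf

/-- For the time-varying consensus dynamics `δ̇ = −L(t) δ`, where `L(t)` is the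
Laplacian of a complete weighted graph with weights `aᵢⱼ(t) ≥ a > 0`, any
solution orthogonal to the all-ones vector decays as
`‖δ(t)‖ ≤ ‖δ(0)‖ e^{−n a t}`. -/
theorem stmt_13 (n : ℕ) (hn : 2 ≤ n) (a : ℝ) (ha : 0 < a)
    (A : ℝ → Matrix (Fin n) (Fin n) ℝ)
    (hsymm : ∀ t i j, A t i j = A t j i)
    (hdiag : ∀ t i, A t i i = 0)
    (hw : ∀ t, 0 ≤ t → ∀ i j, i ≠ j → a ≤ A t i j)
    (L : ℝ → Matrix (Fin n) (Fin n) ℝ)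
    (hL : ∀ t, L t = Matrix.diagonal (fun i => ∑ j, A t i j) - A t)
    (δ : ℝ → Fin n → ℝ)
    (hsum : ∑ i, δ 0 i = 0)
    (hderiv : ∀ t i, HasDerivAt (fun s => δ s i) (-((L t).mulVec (δ t) i)) t) :
    ∀ t, 0 ≤ t →
      Real.sqrt (∑ i, δ t i ^ 2) ≤
        Real.sqrt (∑ i, δ 0 i ^ 2) * Real.exp (-(n * a) * t) :=
  stmt_13_general n a A hsymm hw L hL δ hsum hderiv
end
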